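/- For every nontrivial w ∈ F_r there exists a constant C_w > 0, not depending on γ, such that for every γ ∈ F_r with |γ| ≥ 1 whose reduced word does not have the reduced word of w as a prefix, one has (∫_{B_w} P(γ,ξ)^{1/2} dμ(ξ)) / Ξ(γ) ≤ C_w / |γ|. -/

import Mathlib

/-!
Setting: the free group `F_r = ⟨a₁,…,a_r⟩` (`r ≥ 2`), its boundary `B` of infinite
reduced words, the visual measure `μ` on `B`, the Gromov product, the Poisson kernel
`P(γ,ξ) = (2r-1)^(2(γ|ξ)-|γ|)` and the Harish-Chandra function `Ξ`.
-/

open MeasureTheory Filter Topology ComplexConjugate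
open scoped ENNReal

namespace ArxivFree

/-- The alphabet `S = {a₁^{±1},…,a_r^{±1}}` of generators and their inverses:
a letter is a generator together with a sign. -/
abbrev Letter (r : ℕ) := Fin r × Bool

/-- The inverse of a letter. -/
def bar {r : ℕ} (x : Letter r) : Letter r := (x.1, !x.2)

/-- The boundary `B`: infinite reduced words over the alphabet, i.e. sequences of
letters in which no letter is immediately followed by its inverse. -/
abbrev Boundary (r : ℕ) := {ξ : ℕ → Letter r // ∀ i, ξ (i + 1) ≠ bar (ξ i)}

/-- `l` is a (finite) prefix of the infinite word `ξ`. -/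
def IsPrefixSeq {r : ℕ} (l : List (Letter r)) (ξ : ℕ → Letter r) : Prop :=
  ∀ i, i < l.length → l[i]? = some (ξ i)

/-- The cylinder `B_u`: infinite reduced words admitting the reduced word of `u`
as a prefix. -/
def cylinder {r : ℕ} (u : FreeGroup (Fin r)) : Set (Boundary r) :=
  {ξ | IsPrefixSeq (FreeGroup.toWord u) ξ.1}

/-- The Gromov product: the length of the longest common prefix of the finite word `l`
and the infinite word `ξ`. -/
def gromov {r : ℕ} (l : List (Letter r)) (ξ : ℕ → Letter r) : ℕ :=
  Nat.findGreatest (fun k => ∀ i, i < k → l[i]? = some (ξ i)) l.length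

/-- The Poisson kernel `P(γ,ξ) = (2r-1)^(2(γ|ξ) - |γ|)`. -/
noncomputable def PK {r : ℕ} (γ : FreeGroup (Fin r)) (ξ : Boundary r) : ℝ :=
  (2 * (r : ℝ) - 1) ^
    (2 * (gromov (FreeGroup.toWord γ) ξ.1 : ℤ) - ((FreeGroup.toWord γ).length : ℤ))

/-- The sphere `S_n ⊆ F_r` of elements of word length `n`, as a finite set. -/
noncomputable def sphere (r n : ℕ) : Finset (FreeGroup (Fin r)) :=
  (Set.Finite.preimage (Function.Injective.injOn FreeGroup.toWord_injective)
    (List.finite_length_eq (Letter r) n)).toFinset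

/-- The Harish-Chandra function `Ξ(γ) = ∫_B P(γ,ξ)^{1/2} dμ(ξ)`. -/
noncomputable def HC {r : ℕ} (μ : Measure (Boundary r)) (γ : FreeGroup (Fin r)) : ℝ :=
  ∫ ξ, Real.sqrt (PK γ ξ) ∂μ

end ArxivFree

/-!
On `B_w` the Gromov product `(γ|ξ)` is at most `|w| - 1` because `γ` does not start with `w`,
so the numerator is at most `(2r-1)^(|w|-1)·(2r-1)^(-|γ|/2)`. The denominator is computed
exactly: `b^(γ|ξ) = 1 + ∑_{k<|γ|} (b-1) b^k 1{k < (γ|ξ)}` with `b = 2r-1`, and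
`{k < (γ|ξ)}` is the cylinder of the first `k+1` letters of `γ`, of measure `1/(2r b^k)`, so every
term integrates to `(r-1)/r` and `Ξ(γ) = (1 + (r-1)/r·|γ|)(2r-1)^(-|γ|/2) ≥ |γ|/2·(2r-1)^(-|γ|/2)`.
-/

theorem FreeGroup.toWord_mk_take {α : Type*} [DecidableEq α] (x : FreeGroup α) (k : ℕ) :
    (FreeGroup.mk (x.toWord.take k)).toWord = x.toWord.take k := by
  rw [FreeGroup.toWord_mk]
  exact (FreeGroup.isReduced_toWord.infix (List.take_prefix k _).isInfix).reduce_eq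

theorem pow_eq_one_add_sum_indicator {X R : Type*} [CommRing R] (b : R) (g : X → ℕ) {n : ℕ}
    (hg : ∀ x, g x ≤ n) (x : X) :
    b ^ g x =
      1 + ∑ k ∈ Finset.range n, {y | k < g y}.indicator (fun _ => (b - 1) * b ^ k) x := by
  have hfilter : (Finset.range n).filter (· < g x) = Finset.range (g x) := by
    ext k
    simp only [Finset.mem_filter, Finset.mem_range]
    have := hg x
    omega
  simp only [Set.indicator_apply, Set.mem_ofPred_eq]
  rw [← Finset.sum_filter, hfilter, ← Finset.mul_sum, mul_comm, geom_sum_mul]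
  ring

theorem integral_pow_eq_add_sum_measureReal {X : Type*} [MeasurableSpace X] (μ : Measure X)
    [IsFiniteMeasure μ] (b : ℝ) (g : X → ℕ) {n : ℕ} (hg : ∀ x, g x ≤ n)
    (hmeas : ∀ k < n, MeasurableSet {x | k < g x}) :
    ∫ x, b ^ g x ∂μ =
      μ.real Set.univ + ∑ k ∈ Finset.range n, (b - 1) * b ^ k * μ.real {x | k < g x} := by
  have hint : ∀ k ∈ Finset.range n,
      Integrable ({y | k < g y}.indicator (fun _ => (b - 1) * b ^ k)) μ :=
    fun k hk => (integrable_const _).indicator (hmeas k (Finset.mem_range.mp hk))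
  simp_rw [pow_eq_one_add_sum_indicator b g hg]
  rw [integral_add (integrable_const _) (integrable_finsetSum _ hint),
    integral_finsetSum _ hint]
  simp only [integral_const, smul_eq_mul, mul_one]
  congr 1
  refine Finset.sum_congr rfl fun k hk => ?_
  rw [integral_indicator_const _ (hmeas k (Finset.mem_range.mp hk)), smul_eq_mul, mul_comm]

namespace ArxivFree

variable {r : ℕ}

theorem one_le_two_mul_sub_one (hr : 1 ≤ r) : (1 : ℝ) ≤ 2 * r - 1 := by
  have : (1 : ℝ) ≤ r := by exact_mod_cast hr
  linarith

theorem IsPrefixSeq.eq_of_length_eq {l l' : List (Letter r)} {ξ : ℕ → Letter r}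
    (h : IsPrefixSeq l ξ) (h' : IsPrefixSeq l' ξ) (hlen : l.length = l'.length) : l = l' := by
  refine List.ext_getElem? fun i => ?_
  rcases lt_or_ge i l.length with hi | hi
  · rw [h i hi, h' i (hlen ▸ hi)]
  · rw [List.getElem?_eq_none hi, List.getElem?_eq_none (hlen ▸ hi)]

theorem le_gromov_iff {l : List (Letter r)} {ξ : ℕ → Letter r} {k : ℕ} (hk : k ≤ l.length) :
    k ≤ gromov l ξ ↔ IsPrefixSeq (l.take k) ξ := by
  have htake : IsPrefixSeq (l.take k) ξ ↔ ∀ i < k, l[i]? = some (ξ i) := by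
    simp only [IsPrefixSeq, List.length_take, min_eq_left hk]
    exact forall₂_congr fun i hi => by rw [List.getElem?_take_of_lt hi]
  rw [htake, gromov]
  constructor
  · intro h i hi
    have hspec := Nat.findGreatest_spec (P := fun k => ∀ i < k, l[i]? = some (ξ i))
      (Nat.zero_le l.length) (by simp)
    exact hspec i (hi.trans_le h)
  · exact Nat.le_findGreatest (P := fun k => ∀ i < k, l[i]? = some (ξ i)) hk

theorem gromov_le_length (l : List (Letter r)) (ξ : ℕ → Letter r) : gromov l ξ ≤ l.length :=
  Nat.findGreatest_le _

theorem setOf_le_gromov_eq_cylinder (x : FreeGroup (Fin r)) {k : ℕ}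
    (hk : k ≤ x.toWord.length) :
    {ξ : Boundary r | k ≤ gromov x.toWord ξ.1} = cylinder (FreeGroup.mk (x.toWord.take k)) := by
  ext ξ
  rw [Set.mem_ofPred_eq, le_gromov_iff hk, cylinder, Set.mem_ofPred_eq, FreeGroup.toWord_mk_take]

theorem gromov_lt_length_of_mem_cylinder {γ w : FreeGroup (Fin r)} {ξ : Boundary r}
    (hξ : ξ ∈ cylinder w) (hpre : ¬ w.toWord <+: γ.toWord) :
    gromov γ.toWord ξ.1 < w.toWord.length := by
  by_contra! hle
  have hwγ : w.toWord.length ≤ γ.toWord.length := hle.trans (gromov_le_length _ _)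
  have htake := (le_gromov_iff hwγ).mp hle
  refine hpre ?_
  rw [IsPrefixSeq.eq_of_length_eq hξ htake (by simp [hwγ])]
  exact List.take_prefix _ _

theorem measurableSet_cylinder [BorelSpace (Boundary r)] (u : FreeGroup (Fin r)) :
    MeasurableSet (cylinder u) := by
  have hcoord (i : ℕ) : MeasurableSet {ξ : Boundary r | u.toWord[i]? = some (ξ.1 i)} := by
    have hcont : Continuous fun ξ : Boundary r => ξ.1 i :=
      (continuous_apply i).comp continuous_subtype_val
    exact (hcont.isOpen_preimage {a | u.toWord[i]? = some a} (isOpen_discrete _)).measurableSet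
  have hcyl : cylinder u = ⋂ i ∈ Finset.range u.toWord.length,
      {ξ : Boundary r | u.toWord[i]? = some (ξ.1 i)} := by
    ext ξ
    simp [cylinder, IsPrefixSeq]
  rw [hcyl]
  exact .biInter (Set.to_countable _) fun i _ => hcoord i

def IsVisualMeasure (μ : Measure (Boundary r)) : Prop :=
  ∀ u : FreeGroup (Fin r), u ≠ 1 →
    μ (cylinder u) =
      1 / (2 * (r : ℝ≥0∞) * (2 * (r : ℝ≥0∞) - 1) ^ ((FreeGroup.toWord u).length - 1))

theorem measureReal_lt_gromov {μ : Measure (Boundary r)} (hμ : IsVisualMeasure μ)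
    (hr : 1 ≤ r) (γ : FreeGroup (Fin r)) {k : ℕ} (hk : k < γ.toWord.length) :
    μ.real {ξ | k < gromov γ.toWord ξ.1} = 1 / (2 * r * (2 * r - 1) ^ k) := by
  have hlen : (FreeGroup.mk (γ.toWord.take (k + 1))).toWord.length = k + 1 := by
    rw [FreeGroup.toWord_mk_take, List.length_take, min_eq_left hk]
  have hne : FreeGroup.mk (γ.toWord.take (k + 1)) ≠ 1 := by
    intro h
    simp [h] at hlen
  have hcast : (2 * (r : ℝ≥0∞) - 1) = ((2 * r - 1 : ℕ) : ℝ≥0∞) := by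
    rw [ENNReal.natCast_sub]
    push_cast
    ring
  simp only [Nat.lt_iff_add_one_le]
  rw [measureReal_def, setOf_le_gromov_eq_cylinder γ hk, hμ _ hne, hlen, Nat.add_sub_cancel,
    hcast]
  simp only [one_div, ENNReal.toReal_inv, ENNReal.toReal_mul, ENNReal.toReal_pow,
    ENNReal.toReal_natCast, ENNReal.toReal_ofNat]
  push_cast [Nat.cast_sub (by omega : 1 ≤ 2 * r)]
  ring

theorem sqrt_PK_eq (hr : 1 ≤ r) (γ : FreeGroup (Fin r)) (ξ : Boundary r) :
    Real.sqrt (PK γ ξ) = (2 * r - 1 : ℝ) ^ (-(γ.toWord.length : ℝ) / 2)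
      * (2 * r - 1 : ℝ) ^ gromov γ.toWord ξ.1 := by
  have hb : (0 : ℝ) < 2 * r - 1 := zero_lt_one.trans_le (one_le_two_mul_sub_one hr)
  rw [PK, ← Real.rpow_intCast, Real.sqrt_eq_rpow, ← Real.rpow_mul hb.le, ← Real.rpow_natCast,
    ← Real.rpow_add hb]
  push_cast
  ring_nf

theorem HC_eq [BorelSpace (Boundary r)] {μ : Measure (Boundary r)} [IsProbabilityMeasure μ]
    (hμ : IsVisualMeasure μ) (hr : 1 ≤ r) (γ : FreeGroup (Fin r)) :
    HC μ γ =
      (1 + (r - 1) / r * γ.toWord.length) * (2 * r - 1 : ℝ) ^ (-(γ.toWord.length : ℝ) / 2) := by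
  have hmeas :
      ∀ k < γ.toWord.length, MeasurableSet {ξ : Boundary r | k < gromov γ.toWord ξ.1} :=
    fun k hk => setOf_le_gromov_eq_cylinder γ hk ▸ measurableSet_cylinder _
  have hterm : ∀ k ∈ Finset.range γ.toWord.length,
      (2 * r - 1 - 1 : ℝ) * (2 * r - 1) ^ k * μ.real {ξ | k < gromov γ.toWord ξ.1} =
        (r - 1) / r := by
    intro k hk
    rw [measureReal_lt_gromov hμ hr γ (Finset.mem_range.mp hk)]
    have hb : (0 : ℝ) < 2 * r - 1 := zero_lt_one.trans_le (one_le_two_mul_sub_one hr)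
    field_simp
    ring
  simp_rw [HC, sqrt_PK_eq hr γ]
  rw [integral_const_mul,
    integral_pow_eq_add_sum_measureReal μ _ _ (gromov_le_length _ ·.1) hmeas,
    Finset.sum_congr rfl hterm]
  simp [mul_comm]

theorem setIntegral_cylinder_sqrt_PK_le {μ : Measure (Boundary r)} [IsProbabilityMeasure μ]
    (hr : 1 ≤ r) {γ w : FreeGroup (Fin r)} (hpre : ¬ w.toWord <+: γ.toWord) :
    ∫ ξ in cylinder w, Real.sqrt (PK γ ξ) ∂μ ≤
      (2 * r - 1 : ℝ) ^ (w.toWord.length - 1) *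
        (2 * r - 1 : ℝ) ^ (-(γ.toWord.length : ℝ) / 2) := by
  have hb := one_le_two_mul_sub_one hr
  set C := (2 * r - 1 : ℝ) ^ (w.toWord.length - 1) *
    (2 * r - 1 : ℝ) ^ (-(γ.toWord.length : ℝ) / 2) with hC
  have hbound : ∀ ξ ∈ cylinder w, ‖Real.sqrt (PK γ ξ)‖ ≤ C := by
    intro ξ hξ
    rw [Real.norm_of_nonneg (Real.sqrt_nonneg _), sqrt_PK_eq hr, mul_comm, hC]
    have := gromov_lt_length_of_mem_cylinder hξ hpre
    gcongr
    omega
  have hC0 : 0 ≤ C := by rw [hC]; positivity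
  calc ∫ ξ in cylinder w, Real.sqrt (PK γ ξ) ∂μ
      ≤ C * μ.real (cylinder w) := (Real.le_norm_self _).trans
        (norm_setIntegral_le_of_norm_le_const (measure_lt_top μ _) hbound)
    _ ≤ C := mul_le_of_le_one_right hC0 measureReal_le_one

theorem harish_chandra_estimate_general {r : ℕ} (hr : 2 ≤ r)
    [BorelSpace (Boundary r)]
    (μ : Measure (Boundary r)) [IsProbabilityMeasure μ]
    (hμ : ∀ u : FreeGroup (Fin r), u ≠ 1 →
      μ (cylinder u) =
        1 / (2 * (r : ℝ≥0∞) * (2 * (r : ℝ≥0∞) - 1) ^ ((FreeGroup.toWord u).length - 1)))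
    (w : FreeGroup (Fin r)) :
    ∃ C : ℝ, 0 < C ∧ ∀ γ : FreeGroup (Fin r), 1 ≤ (FreeGroup.toWord γ).length →
      ¬ (FreeGroup.toWord w <+: FreeGroup.toWord γ) →
      (∫ ξ in cylinder w, Real.sqrt (PK γ ξ) ∂μ) / HC μ γ ≤
        C / ((FreeGroup.toWord γ).length : ℝ) := by
  have hr1 : 1 ≤ r := by omega
  have hr' : (2 : ℝ) ≤ r := by exact_mod_cast hr
  set b : ℝ := 2 * r - 1
  have hb : 0 < b := by linarith
  refine ⟨2 * b ^ (w.toWord.length - 1), by positivity, fun γ hγ hpre => ?_⟩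
  set n : ℝ := (γ.toWord.length : ℝ)
  have hn : 0 < n := Nat.cast_pos.mpr hγ
  have hhalf : n / 2 ≤ 1 + (r - 1) / r * n := by
    have : (1 : ℝ) / 2 ≤ (r - 1) / r := by rw [div_le_div_iff₀] <;> linarith
    nlinarith
  rw [HC_eq hμ hr1]
  calc (∫ ξ in cylinder w, Real.sqrt (PK γ ξ) ∂μ) / ((1 + (r - 1) / r * n) * b ^ (-n / 2))
      ≤ b ^ (w.toWord.length - 1) * b ^ (-n / 2) / (n / 2 * b ^ (-n / 2)) := by
        gcongr
        exact setIntegral_cylinder_sqrt_PK_le hr1 hpre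
    _ = 2 * b ^ (w.toWord.length - 1) / n := by
        field_simp

/-- Lemma: Harish-Chandra estimate.
For every nontrivial $w$ there is $C_w > 0$, independent of $γ$, such that for all
$γ ≠ 1$ whose reduced word does not start with the reduced word of $w$:
$⟨π(γ)1_B, 1_{B_w}⟩/Ξ(γ) = (∫_{B_w} P(γ,ξ)^{1/2} dμ)/Ξ(γ) ≤ C_w/|γ|$. -/
theorem harish_chandra_estimate {r : ℕ} (hr : 2 ≤ r)
    [BorelSpace (Boundary r)]
    (μ : Measure (Boundary r)) [IsProbabilityMeasure μ]
    (hμ : ∀ u : FreeGroup (Fin r), u ≠ 1 →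
      μ (cylinder u) =
        1 / (2 * (r : ℝ≥0∞) * (2 * (r : ℝ≥0∞) - 1) ^ ((FreeGroup.toWord u).length - 1)))
    (w : FreeGroup (Fin r)) (hw : w ≠ 1) :
    ∃ C : ℝ, 0 < C ∧ ∀ γ : FreeGroup (Fin r), 1 ≤ (FreeGroup.toWord γ).length →
      ¬ (FreeGroup.toWord w <+: FreeGroup.toWord γ) →
      (∫ ξ in cylinder w, Real.sqrt (PK γ ξ) ∂μ) / HC μ γ ≤
        C / ((FreeGroup.toWord γ).length : ℝ) :=
  harish_chandra_estimate_general hr μ hμ w
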